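/- arXiv:1711.09506 — 4 statements merged into one kernel-verified Lean document; each statement's English description precedes it below -/
import Mathlib

section
/- Let α ∈ (0,1), let c_d ≥ 1 be a constant, let v : (0,∞) → (0,∞) be non-decreasing with v(2r) ≤ c_d·v(r) for all r > 0, let h(r) := r·v(r)^{1/α} with generalized inverse h^{-1}(t) := inf{r > 0 : h(r) ≥ t}, and set q := 1 + γ/α where γ := log(c_d)/log(2). Then the function t ↦ t/h^{-1}(t) is non-decreasing on (0,∞); moreover, for every R > 0 there exists c' > 0 such that t/h^{-1}(t) ≥ t^{1-1/q}/c' for all t ∈ (0, h(R)). -/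
/-!
Since `h(r)/r = v(r)^(1/α)` is non-decreasing, `h(c r) ≥ c h(r)` for `c ≥ 1`, hence
`h⁻¹(c t) ≤ c h⁻¹(t)`; taking `c = t/s` gives the monotonicity of `t / h⁻¹(t)`.
Iterating the doubling condition gives `v(r) (ρ/r)^γ ≤ c_d v(ρ)` for `ρ ≤ r`, hence
`h(R) (ρ/R)^q ≤ c_d^(1/α) h(ρ)`. Choosing `ρ` with `(ρ/R)^q = c_d^(1/α) t / h(R)` makes
`h(ρ) ≥ t`, so `h⁻¹(t) ≤ ρ`, which is a constant times `t^(1/q)`.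
-/

/-- The time-scaling function `h(r) = r * v(r)^(1/α)`. -/
noncomputable def hfun (α : ℝ) (v : ℝ → ℝ) (r : ℝ) : ℝ := r * v r ^ (1/α)

/-- Generalized inverse `h⁻¹(t) = inf {r > 0 : h(r) ≥ t}`. -/
noncomputable def hinv (α : ℝ) (v : ℝ → ℝ) (t : ℝ) : ℝ :=
  sInf {r : ℝ | 0 < r ∧ t ≤ hfun α v r}

open Real Set

section Inverse

variable {α : ℝ} {v : ℝ → ℝ}

lemma hfun_pos (hv_pos : ∀ r : ℝ, 0 < r → 0 < v r) {r : ℝ} (hr : 0 < r) : 0 < hfun α v r :=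
  mul_pos hr (rpow_pos_of_pos (hv_pos r hr) _)

lemma hfun_mul_le_hfun_mul_of_le (hα : 0 ≤ α) (hv_pos : ∀ r : ℝ, 0 < r → 0 < v r)
    (hv_mono : ∀ r s : ℝ, 0 < r → r ≤ s → v r ≤ v s) {ρ r : ℝ} (hρ : 0 < ρ) (hρr : ρ ≤ r) :
    hfun α v ρ * r ≤ hfun α v r * ρ := by
  have hr : 0 < r := hρ.trans_le hρr
  have hv : v ρ ^ (1 / α) ≤ v r ^ (1 / α) :=
    rpow_le_rpow (hv_pos ρ hρ).le (hv_mono ρ r hρ hρr) (by positivity)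
  calc hfun α v ρ * r = ρ * r * v ρ ^ (1 / α) := by unfold hfun; ring
    _ ≤ ρ * r * v r ^ (1 / α) := by gcongr
    _ = hfun α v r * ρ := by unfold hfun; ring

lemma hinv_set_nonempty (hα : 0 ≤ α) (hv_pos : ∀ r : ℝ, 0 < r → 0 < v r)
    (hv_mono : ∀ r s : ℝ, 0 < r → r ≤ s → v r ≤ v s) (t : ℝ) :
    {r : ℝ | 0 < r ∧ t ≤ hfun α v r}.Nonempty := by
  have h1 : 0 < hfun α v 1 := hfun_pos hv_pos one_pos
  have hr : 1 ≤ max 1 (t / hfun α v 1) := le_max_left _ _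
  refine ⟨_, one_pos.trans_le hr, ?_⟩
  calc t ≤ hfun α v 1 * max 1 (t / hfun α v 1) := (div_le_iff₀' h1).1 (le_max_right _ _)
    _ ≤ hfun α v (max 1 (t / hfun α v 1)) := by
      simpa using hfun_mul_le_hfun_mul_of_le hα hv_pos hv_mono one_pos hr

lemma hinv_le_of_le_hfun {t r : ℝ} (hr : 0 < r) (htr : t ≤ hfun α v r) : hinv α v t ≤ r :=
  csInf_le ⟨0, fun _ hs => hs.1.le⟩ ⟨hr, htr⟩

lemma hinv_pos (hα : 0 ≤ α) (hv_pos : ∀ r : ℝ, 0 < r → 0 < v r)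
    (hv_mono : ∀ r s : ℝ, 0 < r → r ≤ s → v r ≤ v s) {t : ℝ} (ht : 0 < t) :
    0 < hinv α v t := by
  have h1 : 0 < hfun α v 1 := hfun_pos hv_pos one_pos
  refine (lt_min one_pos (div_pos ht h1)).trans_le
    (le_csInf (hinv_set_nonempty hα hv_pos hv_mono t) ?_)
  rintro r ⟨hr, htr⟩
  rcases le_total 1 r with h | h
  · exact (min_le_left _ _).trans h
  · refine (min_le_right _ _).trans ((div_le_iff₀ h1).2 ?_)
    have := hfun_mul_le_hfun_mul_of_le hα hv_pos hv_mono hr h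
    linarith

lemma hinv_mul_le (hα : 0 ≤ α) (hv_pos : ∀ r : ℝ, 0 < r → 0 < v r)
    (hv_mono : ∀ r s : ℝ, 0 < r → r ≤ s → v r ≤ v s) {c : ℝ} (hc : 1 ≤ c) (t : ℝ) :
    hinv α v (c * t) ≤ c * hinv α v t := by
  have hc0 : 0 < c := one_pos.trans_le hc
  rw [← div_le_iff₀' hc0]
  refine le_csInf (hinv_set_nonempty hα hv_pos hv_mono t) ?_
  rintro r ⟨hr, htr⟩
  rw [div_le_iff₀' hc0]
  refine hinv_le_of_le_hfun (by positivity) ?_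
  have hslope := hfun_mul_le_hfun_mul_of_le hα hv_pos hv_mono hr (le_mul_of_one_le_left hr.le hc)
  calc c * t ≤ c * hfun α v r := by gcongr
    _ ≤ hfun α v (c * r) := le_of_mul_le_mul_right (by linarith) hr

theorem monotoneOn_div_hinv (hα : 0 ≤ α) (hv_pos : ∀ r : ℝ, 0 < r → 0 < v r)
    (hv_mono : ∀ r s : ℝ, 0 < r → r ≤ s → v r ≤ v s) :
    MonotoneOn (fun t => t / hinv α v t) (Ioi 0) := by
  intro s (hs : 0 < s) t (ht : 0 < t) hst
  have hinv_t : hinv α v t ≤ t / s * hinv α v s := by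
    simpa [div_mul_cancel₀ t hs.ne'] using
      hinv_mul_le hα hv_pos hv_mono ((one_le_div hs).2 hst) s
  rw [div_le_div_iff₀ (hinv_pos hα hv_pos hv_mono hs) (hinv_pos hα hv_pos hv_mono ht)]
  calc s * hinv α v t ≤ s * (t / s * hinv α v s) := by gcongr
    _ = t * hinv α v s := by field_simp

lemma hinv_le_of_hfun_scaling {q A R t : ℝ} (hq : 0 < q) (hA : 0 < A) (hR : 0 < R) (ht : 0 < t)
    (htR : t ≤ hfun α v R)
    (hscale : ∀ ρ, 0 < ρ → ρ ≤ R → hfun α v R * (ρ / R) ^ q ≤ A * hfun α v ρ) :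
    hinv α v t ≤ R * (A * t / hfun α v R) ^ (1 / q) := by
  set y := A * t / hfun α v R
  have hy : 0 < y := div_pos (mul_pos hA ht) (ht.trans_le htR)
  rcases le_total y 1 with hy1 | hy1
  · have hρ : 0 < R * y ^ (1 / q) := by positivity
    refine hinv_le_of_le_hfun hρ (le_of_mul_le_mul_left ?_ hA)
    have hyq : (R * y ^ (1 / q) / R) ^ q = y := by
      rw [mul_div_cancel_left₀ _ hR.ne', ← rpow_mul hy.le, one_div_mul_cancel hq.ne', rpow_one]
    have := hscale _ hρ (mul_le_of_le_one_right hR.le (rpow_le_one hy.le hy1 (by positivity)))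
    rwa [hyq, mul_div_cancel₀ _ (ht.trans_le htR).ne'] at this
  · calc hinv α v t ≤ R := hinv_le_of_le_hfun hR htR
      _ ≤ R * y ^ (1 / q) := le_mul_of_one_le_right hR.le (one_le_rpow hy1 (by positivity))

end Inverse

section Doubling

variable {cd γ : ℝ} {v : ℝ → ℝ}

lemma doubling_two_pow_mul_le (hcd : 0 ≤ cd) (hv_doub : ∀ r : ℝ, 0 < r → v (2 * r) ≤ cd * v r)
    (n : ℕ) {r : ℝ} (hr : 0 < r) : v (2 ^ n * r) ≤ cd ^ n * v r := by
  induction n with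
  | zero => simp
  | succ n ih =>
    calc v (2 ^ (n + 1) * r) = v (2 * (2 ^ n * r)) := by ring_nf
      _ ≤ cd * v (2 ^ n * r) := hv_doub _ (by positivity)
      _ ≤ cd * (cd ^ n * v r) := by gcongr
      _ = cd ^ (n + 1) * v r := by ring

lemma doubling_mul_rpow_le (hγ : 0 ≤ γ) (hcdγ : cd ≤ 2 ^ γ) (hcd : 0 ≤ cd)
    (hv_pos : ∀ r : ℝ, 0 < r → 0 < v r) (hv_mono : ∀ r s : ℝ, 0 < r → r ≤ s → v r ≤ v s)
    (hv_doub : ∀ r : ℝ, 0 < r → v (2 * r) ≤ cd * v r) {ρ r : ℝ} (hρ : 0 < ρ) (hρr : ρ ≤ r) :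
    v r * (ρ / r) ^ γ ≤ cd * v ρ := by
  have hr : 0 < r := hρ.trans_le hρr
  obtain ⟨n, hn, hn1⟩ := exists_nat_pow_near ((one_le_div hρ).2 hρr) one_lt_two
  have hv : v r ≤ cd ^ (n + 1) * v ρ :=
    (hv_mono _ _ hr ((div_le_iff₀ hρ).1 hn1.le)).trans (doubling_two_pow_mul_le hcd hv_doub _ hρ)
  have hpow : cd ^ n * (ρ / r) ^ γ ≤ 1 := by
    calc cd ^ n * (ρ / r) ^ γ ≤ ((2 : ℝ) ^ n) ^ γ * (ρ / r) ^ γ := by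
          rw [← rpow_natCast_mul zero_le_two, mul_comm (n : ℝ), rpow_mul_natCast zero_le_two]
          gcongr
      _ = (2 ^ n * (ρ / r)) ^ γ := (mul_rpow (by positivity) (by positivity)).symm
      _ ≤ 1 := by
          refine rpow_le_one (by positivity) ?_ hγ
          rw [mul_div_assoc', div_le_one hr]
          exact (le_div_iff₀ hρ).1 hn
  calc v r * (ρ / r) ^ γ ≤ cd ^ (n + 1) * v ρ * (ρ / r) ^ γ := by gcongr
    _ = cd * v ρ * (cd ^ n * (ρ / r) ^ γ) := by ring
    _ ≤ cd * v ρ := mul_le_of_le_one_right (mul_nonneg hcd (hv_pos ρ hρ).le) hpow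

lemma hfun_mul_rpow_le {α : ℝ} (hα : 0 < α) (hγ : 0 ≤ γ) (hcdγ : cd ≤ 2 ^ γ) (hcd : 0 ≤ cd)
    (hv_pos : ∀ r : ℝ, 0 < r → 0 < v r) (hv_mono : ∀ r s : ℝ, 0 < r → r ≤ s → v r ≤ v s)
    (hv_doub : ∀ r : ℝ, 0 < r → v (2 * r) ≤ cd * v r) {ρ r : ℝ} (hρ : 0 < ρ) (hρr : ρ ≤ r) :
    hfun α v r * (ρ / r) ^ (1 + γ / α) ≤ cd ^ (1 / α) * hfun α v ρ := by
  have hr : 0 < r := hρ.trans_le hρr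
  have hx : 0 < ρ / r := by positivity
  calc hfun α v r * (ρ / r) ^ (1 + γ / α) = ρ * (v r * (ρ / r) ^ γ) ^ (1 / α) := by
        rw [mul_rpow (hv_pos r hr).le (rpow_nonneg hx.le γ), ← rpow_mul hx.le, mul_one_div,
          rpow_add hx, rpow_one]
        unfold hfun
        field_simp
    _ ≤ ρ * (cd * v ρ) ^ (1 / α) := by
        have := hv_pos r hr
        gcongr ρ * ?_ ^ _
        exact doubling_mul_rpow_le hγ hcdγ hcd hv_pos hv_mono hv_doub hρ hρr
    _ = cd ^ (1 / α) * hfun α v ρ := by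
        rw [mul_rpow hcd (hv_pos ρ hρ).le]
        unfold hfun
        ring

end Doubling

/-- Lemma 4.4(4), first part: `t ↦ t / h⁻¹(t)` is non-decreasing on `(0,∞)`,
and for every `R > 0` there is `c' > 0` with
`t / h⁻¹(t) ≥ t^(1-1/q) / c'` for `t ∈ (0, h(R))`, where `q = 1 + γ/α`. -/
theorem stmt_4 (α cd : ℝ) (hα : α ∈ Set.Ioo (0:ℝ) 1) (hcd : 1 ≤ cd)
    (v : ℝ → ℝ) (hv_pos : ∀ r : ℝ, 0 < r → 0 < v r)
    (hv_mono : ∀ r s : ℝ, 0 < r → r ≤ s → v r ≤ v s)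
    (hv_doub : ∀ r : ℝ, 0 < r → v (2 * r) ≤ cd * v r) :
    MonotoneOn (fun t : ℝ => t / hinv α v t) (Set.Ioi (0:ℝ)) ∧
    (∀ R : ℝ, 0 < R → ∃ c : ℝ, 0 < c ∧
      ∀ t ∈ Set.Ioo (0:ℝ) (hfun α v R),
        t ^ (1 - 1 / (1 + (Real.log cd / Real.log 2) / α)) / c ≤ t / hinv α v t) := by
  obtain ⟨hα0, -⟩ := hα
  refine ⟨monotoneOn_div_hinv hα0.le hv_pos hv_mono, fun R hR => ?_⟩
  set γ := Real.log cd / Real.log 2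
  set q := 1 + γ / α
  have hγ : 0 ≤ γ := div_nonneg (log_nonneg hcd) (log_nonneg one_le_two)
  have hcdγ : cd ≤ 2 ^ γ := (rpow_logb two_pos (by norm_num) (by linarith)).ge
  have hhR : 0 < hfun α v R := hfun_pos hv_pos hR
  refine ⟨R * (cd ^ (1 / α) / hfun α v R) ^ (1 / q), by positivity, fun t ⟨ht, htR⟩ => ?_⟩
  have hinv_le := hinv_le_of_hfun_scaling (by positivity) (by positivity) hR ht htR.le
    fun ρ hρ hρR => hfun_mul_rpow_le hα0 hγ hcdγ (by linarith) hv_pos hv_mono hv_doub hρ hρR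
  rw [mul_div_right_comm, mul_rpow (by positivity) ht.le, ← mul_assoc] at hinv_le
  calc t ^ (1 - 1 / q) / (R * (cd ^ (1 / α) / hfun α v R) ^ (1 / q))
      = t / (R * (cd ^ (1 / α) / hfun α v R) ^ (1 / q) * t ^ (1 / q)) := by
        rw [rpow_sub ht, rpow_one, div_div, mul_comm]
    _ ≤ t / hinv α v t := by
        gcongr
        exact hinv_pos hα0.le hv_pos hv_mono ht
end

section
/- Let α ∈ (0,1), let c_d ≥ 1 be a constant, let v : (0,∞) → (0,∞) be non-decreasing with v(2r) ≤ c_d·v(r) for all r > 0, let h(r) := r·v(r)^{1/α} with generalized inverse h^{-1}(t) := inf{r > 0 : h(r) ≥ t}, and set q := 1 + γ/α where γ := log(c_d)/log(2). Then there exist constants c₁, c₂ > 0 such that for all r ∈ (0, e^{-1}): c₁·h^{-1}(r)·|log r|^{1/q} ≤ h^{-1}(r·|log r|) ≤ c₂·h^{-1}(r)·|log r|. -/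
/-- Lemma 4.4(4), first displayed inequality: with `q = 1 + γ/α`,
`c₁ h⁻¹(r) |log r|^(1/q) ≤ h⁻¹(r |log r|) ≤ c₂ h⁻¹(r) |log r|`
for all `r ∈ (0, e⁻¹)`. -/
theorem stmt_6 (α cd : ℝ) (hα : α ∈ Set.Ioo (0:ℝ) 1) (hcd : 1 ≤ cd)
    (v : ℝ → ℝ) (hv_pos : ∀ r : ℝ, 0 < r → 0 < v r)
    (hv_mono : ∀ r s : ℝ, 0 < r → r ≤ s → v r ≤ v s)
    (hv_doub : ∀ r : ℝ, 0 < r → v (2 * r) ≤ cd * v r) :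
    ∃ c₁ : ℝ, 0 < c₁ ∧ ∃ c₂ : ℝ, 0 < c₂ ∧
      ∀ r ∈ Set.Ioo (0:ℝ) (Real.exp (-1)),
        c₁ * hinv α v r *
            |Real.log r| ^ (1 / (1 + (Real.log cd / Real.log 2) / α))
          ≤ hinv α v (r * |Real.log r|) ∧
        hinv α v (r * |Real.log r|) ≤ c₂ * hinv α v r * |Real.log r| := by
  obtain ⟨hα0, hα1⟩ := hα
  have hcd0 : (0:ℝ) < cd := lt_of_lt_of_le one_pos hcd
  set γ : ℝ := Real.log cd / Real.log 2 with hγ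
  set q : ℝ := 1 + γ / α with hq
  have hγ0 : 0 ≤ γ := div_nonneg (Real.log_nonneg hcd) (Real.log_nonneg (by norm_num))
  have hq1 : 1 ≤ q := le_add_of_nonneg_right (div_nonneg hγ0 hα0.le)
  have hq0 : (0:ℝ) < q := lt_of_lt_of_le one_pos hq1
  have hαinv : (0:ℝ) ≤ 1/α := by positivity
  -- 2^q = 2 * cd^(1/α)
  have h2γ : (2:ℝ) ^ γ = cd := by
    rw [hγ, Real.rpow_def_of_pos (by norm_num : (0:ℝ) < 2), mul_comm,
      div_mul_cancel₀ _ (ne_of_gt (Real.log_pos (by norm_num)))]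
    exact Real.exp_log hcd0
  have h2q : (2:ℝ) ^ q = 2 * cd ^ (1/α) := by
    rw [hq, Real.rpow_add (by norm_num : (0:ℝ) < 2), Real.rpow_one]
    congr 1
    rw [div_eq_mul_one_div γ α, Real.rpow_mul (by norm_num : (0:ℝ) ≤ 2), h2γ]
  -- basic facts about hfun
  have hpos : ∀ s : ℝ, 0 < s → 0 < hfun α v s := fun s hs =>
    mul_pos hs (Real.rpow_pos_of_pos (hv_pos s hs) _)
  have hmono : ∀ s t : ℝ, 0 < s → s ≤ t → hfun α v s ≤ hfun α v t := by
    intro s t hs hst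
    exact mul_le_mul hst
      (Real.rpow_le_rpow (hv_pos s hs).le (hv_mono s t hs hst) hαinv)
      (Real.rpow_nonneg (hv_pos s hs).le _) (by linarith)
  have hscale_low : ∀ μ s : ℝ, 1 ≤ μ → 0 < s → μ * hfun α v s ≤ hfun α v (μ * s) := by
    intro μ s hμ hs
    have hμs : s ≤ μ * s := le_mul_of_one_le_left hs.le hμ
    have : v s ^ (1/α) ≤ v (μ * s) ^ (1/α) :=
      Real.rpow_le_rpow (hv_pos s hs).le (hv_mono s (μ*s) hs hμs) hαinv
    calc μ * hfun α v s = μ * s * v s ^ (1/α) := by rw [hfun]; ring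
      _ ≤ μ * s * v (μ*s) ^ (1/α) := by
          apply mul_le_mul_of_nonneg_left this (by positivity)
      _ = hfun α v (μ * s) := rfl
  have hdoub : ∀ s : ℝ, 0 < s → hfun α v (2*s) ≤ 2 * cd ^ (1/α) * hfun α v s := by
    intro s hs
    have h1 : v (2*s) ^ (1/α) ≤ (cd * v s) ^ (1/α) :=
      Real.rpow_le_rpow (hv_pos _ (by linarith)).le (hv_doub s hs) hαinv
    have h2 : (cd * v s) ^ (1/α) = cd ^ (1/α) * v s ^ (1/α) :=
      Real.mul_rpow hcd0.le (hv_pos s hs).le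
    calc hfun α v (2*s) = 2*s * v (2*s) ^ (1/α) := rfl
      _ ≤ 2*s * (cd ^ (1/α) * v s ^ (1/α)) := by
          rw [← h2]; exact mul_le_mul_of_nonneg_left h1 (by linarith)
      _ = 2 * cd ^ (1/α) * hfun α v s := by rw [hfun]; ring
  have hiter : ∀ n : ℕ, ∀ s : ℝ, 0 < s →
      hfun α v (2^n * s) ≤ (2 * cd ^ (1/α))^n * hfun α v s := by
    intro n
    induction n with
    | zero => intro s hs; simp
    | succ n ih =>
        intro s hs
        have h2s : (0:ℝ) < 2^n * s := by positivity
        calc hfun α v (2^(n+1) * s) = hfun α v (2 * (2^n * s)) := by ring_nf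
          _ ≤ 2 * cd ^ (1/α) * hfun α v (2^n * s) := hdoub _ h2s
          _ ≤ 2 * cd ^ (1/α) * ((2 * cd ^ (1/α))^n * hfun α v s) := by
              apply mul_le_mul_of_nonneg_left (ih s hs)
              have : (0:ℝ) < cd ^ (1/α) := Real.rpow_pos_of_pos hcd0 _
              positivity
          _ = (2 * cd ^ (1/α))^(n+1) * hfun α v s := by ring
  have hscale_up : ∀ μ s : ℝ, 1 ≤ μ → 0 < s →
      hfun α v (μ * s) ≤ (2*μ) ^ q * hfun α v s := by
    intro μ s hμ hs
    have hμ0 : (0:ℝ) < μ := by linarith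
    set n : ℕ := ⌈Real.logb 2 μ⌉₊ with hn
    have hlogb0 : 0 ≤ Real.logb 2 μ := Real.logb_nonneg (by norm_num) hμ
    have hμ2n : μ ≤ (2:ℝ)^(n:ℕ) := by
      have h1 : μ = (2:ℝ) ^ (Real.logb 2 μ) := (Real.rpow_logb (by norm_num) (by norm_num) hμ0).symm
      have h2 : (2:ℝ) ^ (Real.logb 2 μ) ≤ (2:ℝ) ^ ((n:ℕ):ℝ) :=
        Real.rpow_le_rpow_of_exponent_le (by norm_num) (Nat.le_ceil _)
      rw [Real.rpow_natCast] at h2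
      linarith [h1 ▸ h2]
    have h2n2μ : ((2:ℝ)^(n:ℕ) : ℝ) ≤ 2*μ := by
      have h1 : ((n:ℕ):ℝ) ≤ Real.logb 2 μ + 1 := by
        have := Nat.ceil_lt_add_one hlogb0
        exact_mod_cast le_of_lt this
      have h2 : (2:ℝ) ^ ((n:ℕ):ℝ) ≤ (2:ℝ) ^ (Real.logb 2 μ + 1) :=
        Real.rpow_le_rpow_of_exponent_le (by norm_num) h1
      rw [Real.rpow_natCast] at h2
      rw [Real.rpow_add (by norm_num), Real.rpow_one, Real.rpow_logb (by norm_num) (by norm_num) hμ0] at h2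
      linarith
    have key : ((2:ℝ) * cd ^ (1/α))^(n:ℕ) ≤ (2*μ) ^ q := by
      rw [← h2q]
      have e1 : ((2:ℝ)^q)^(n:ℕ) = ((2:ℝ)^(n:ℕ)) ^ q := by
        rw [← Real.rpow_natCast ((2:ℝ)^q) n, ← Real.rpow_mul (by norm_num : (0:ℝ) ≤ 2),
          mul_comm q ((n:ℕ):ℝ), Real.rpow_mul (by norm_num : (0:ℝ) ≤ 2), Real.rpow_natCast]
      rw [e1]
      exact Real.rpow_le_rpow (by positivity) h2n2μ hq0.le
    calc hfun α v (μ * s) ≤ hfun α v (2^n * s) := by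
          apply hmono _ _ (by positivity)
          exact mul_le_mul_of_nonneg_right hμ2n hs.le
      _ ≤ (2 * cd ^ (1/α))^n * hfun α v s := hiter n s hs
      _ ≤ (2*μ)^q * hfun α v s := mul_le_mul_of_nonneg_right key (hpos s hs).le
  -- facts about the sets
  have Sbdd : ∀ t : ℝ, BddBelow {r : ℝ | 0 < r ∧ t ≤ hfun α v r} :=
    fun t => ⟨0, fun s hs => hs.1.le⟩
  have v1 : (0:ℝ) < v 1 ^ (1/α) := Real.rpow_pos_of_pos (hv_pos 1 one_pos) _
  have Sne : ∀ t : ℝ, 0 < t → ({r : ℝ | 0 < r ∧ t ≤ hfun α v r}).Nonempty := by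
    intro t ht
    refine ⟨max 1 (t / v 1 ^ (1/α)), lt_of_lt_of_le one_pos (le_max_left _ _), ?_⟩
    have hs1 : (1:ℝ) ≤ max 1 (t / v 1 ^ (1/α)) := le_max_left _ _
    have hs0 : (0:ℝ) < max 1 (t / v 1 ^ (1/α)) := lt_of_lt_of_le one_pos hs1
    calc t = (t / v 1 ^ (1/α)) * v 1 ^ (1/α) := by field_simp
      _ ≤ max 1 (t / v 1 ^ (1/α)) * v 1 ^ (1/α) :=
          mul_le_mul_of_nonneg_right (le_max_right _ _) v1.le
      _ ≤ max 1 (t / v 1 ^ (1/α)) * v (max 1 (t / v 1 ^ (1/α))) ^ (1/α) := by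
          apply mul_le_mul_of_nonneg_left _ hs0.le
          exact Real.rpow_le_rpow (hv_pos 1 one_pos).le (hv_mono 1 _ one_pos hs1) hαinv
      _ = hfun α v _ := rfl
  have hinv_nonneg : ∀ t : ℝ, 0 < t → 0 ≤ hinv α v t := by
    intro t ht
    exact le_csInf (Sne t ht) (fun s hs => hs.1.le)
  -- main part
  refine ⟨1/2, by norm_num, 1, one_pos, ?_⟩
  rintro r ⟨hr0, hre⟩
  have hlogr : Real.log r < -1 := by
    have := Real.log_lt_log hr0 hre
    rwa [Real.log_exp] at this
  set L : ℝ := |Real.log r| with hL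
  have hLeq : L = -Real.log r := abs_of_neg (by linarith)
  have hL1 : 1 < L := by rw [hLeq]; linarith
  have hL0 : (0:ℝ) < L := by linarith
  have hrL0 : (0:ℝ) < r * L := mul_pos hr0 hL0
  constructor
  · -- lower bound
    rcases le_total L ((2:ℝ)^q) with hcase | hcase
    · -- L ≤ 2^q : use monotonicity of hinv and L^(1/q) ≤ 2
      have hLq2 : L ^ (1/q) ≤ 2 := by
        have h1 : L ^ (1/q) ≤ ((2:ℝ)^q) ^ (1/q) := Real.rpow_le_rpow hL0.le hcase (by positivity)
        rwa [← Real.rpow_mul (by norm_num : (0:ℝ) ≤ 2), mul_one_div, div_self hq0.ne',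
          Real.rpow_one] at h1
      have hmono_inv : hinv α v r ≤ hinv α v (r * L) := by
        apply csInf_le_csInf (Sbdd r) (Sne _ hrL0)
        intro s hs
        exact ⟨hs.1, le_trans (le_mul_of_one_le_right hr0.le hL1.le) hs.2⟩
      have h0 : 0 ≤ hinv α v r := hinv_nonneg r hr0
      have hLqnn : 0 ≤ L ^ (1/q) := Real.rpow_nonneg hL0.le _
      nlinarith
    · -- 2^q ≤ L
      set μ : ℝ := L ^ (1/q) / 2 with hμdef
      have hLq2 : (2:ℝ) ≤ L ^ (1/q) := by
        have h1 : ((2:ℝ)^q) ^ (1/q) ≤ L ^ (1/q) :=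
          Real.rpow_le_rpow (by positivity) hcase (by positivity)
        rwa [← Real.rpow_mul (by norm_num : (0:ℝ) ≤ 2), mul_one_div, div_self hq0.ne',
          Real.rpow_one] at h1
      have hμ1 : (1:ℝ) ≤ μ := by rw [hμdef]; linarith
      have hμ0 : (0:ℝ) < μ := by linarith
      have h2μL : (2*μ) ^ q = L := by
        rw [hμdef, mul_div_cancel₀ _ (by norm_num : (2:ℝ) ≠ 0),
          ← Real.rpow_mul hL0.le, one_div_mul_cancel hq0.ne', Real.rpow_one]
      have key : μ * hinv α v r ≤ hinv α v (r * L) := by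
        apply le_csInf (Sne _ hrL0)
        rintro s ⟨hs0, hs⟩
        have hsμ0 : 0 < s / μ := by positivity
        have h1 : hfun α v s ≤ L * hfun α v (s/μ) := by
          have := hscale_up μ (s/μ) hμ1 hsμ0
          rw [mul_div_cancel₀ _ hμ0.ne'] at this
          rw [← h2μL]; exact this
        have h2 : r ≤ hfun α v (s/μ) := by
          have h3 : r * L ≤ L * hfun α v (s/μ) := le_trans hs h1
          rw [mul_comm r L] at h3
          exact le_of_mul_le_mul_left h3 hL0
        have h4 : hinv α v r ≤ s / μ := csInf_le (Sbdd r) ⟨hsμ0, h2⟩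
        calc μ * hinv α v r ≤ μ * (s/μ) := mul_le_mul_of_nonneg_left h4 hμ0.le
          _ = s := by field_simp
      calc 1/2 * hinv α v r * L ^ (1/q) = μ * hinv α v r := by rw [hμdef]; ring
        _ ≤ hinv α v (r * L) := key
  · -- upper bound
    have step : ∀ s ∈ {x : ℝ | 0 < x ∧ r ≤ hfun α v x}, hinv α v (r * L) ≤ L * s := by
      rintro s ⟨hs0, hs⟩
      apply csInf_le (Sbdd _)
      refine ⟨mul_pos hL0 hs0, ?_⟩
      calc r * L = L * r := mul_comm _ _
        _ ≤ L * hfun α v s := mul_le_mul_of_nonneg_left hs hL0.le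
        _ ≤ hfun α v (L * s) := hscale_low L s hL1.le hs0
    have h1 : hinv α v (r * L) / L ≤ hinv α v r := by
      apply le_csInf (Sne r hr0)
      intro s hs
      rw [div_le_iff₀ hL0]
      linarith [step s hs]
    rw [div_le_iff₀ hL0] at h1
    calc hinv α v (r * L) ≤ hinv α v r * L := h1
      _ = 1 * hinv α v r * L := by ring
end

section
/- Let α ∈ (0,1), let c_d ≥ 1 be a constant, let v : (0,∞) → (0,∞) be non-decreasing with v(2r) ≤ c_d·v(r) for all r > 0, let h(r) := r·v(r)^{1/α} with generalized inverse h^{-1}(t) := inf{r > 0 : h(r) ≥ t}, and set q := 1 + γ/α where γ := log(c_d)/log(2). Then there exist constants c₃, c₄ > 0 such that for all r ∈ (0, e^{-e}): c₃·h^{-1}(r)·(log|log r|)^{1/q} ≤ h^{-1}(r·log|log r|) ≤ c₄·h^{-1}(r)·log|log r|. -/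
section auxLemmas
variable {α cd : ℝ} {v : ℝ → ℝ}

lemma hfun_mono' (hα : 0 < α) (hv_pos : ∀ r : ℝ, 0 < r → 0 < v r)
    (hv_mono : ∀ r s : ℝ, 0 < r → r ≤ s → v r ≤ v s)
    {r s : ℝ} (hr : 0 < r) (hrs : r ≤ s) : hfun α v r ≤ hfun α v s := by
  unfold hfun
  have h1 : (0:ℝ) ≤ 1/α := by positivity
  have := Real.rpow_le_rpow (hv_pos r hr).le (hv_mono r s hr hrs) h1
  exact mul_le_mul hrs this (Real.rpow_nonneg (hv_pos r hr).le _) (hr.le.trans hrs)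

lemma S_nonempty' (hα : 0 < α) (hv_pos : ∀ r : ℝ, 0 < r → 0 < v r)
    (hv_mono : ∀ r s : ℝ, 0 < r → r ≤ s → v r ≤ v s) (t : ℝ) :
    ({r : ℝ | 0 < r ∧ t ≤ hfun α v r}).Nonempty := by
  have hc : (0:ℝ) < v 1 ^ (1/α) := Real.rpow_pos_of_pos (hv_pos 1 one_pos) _
  set c := v 1 ^ (1/α) with hcdef
  refine ⟨max 1 (t/c), lt_of_lt_of_le one_pos (le_max_left _ _), ?_⟩
  have hr1 : (1:ℝ) ≤ max 1 (t/c) := le_max_left _ _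
  have hrpos : (0:ℝ) < max 1 (t/c) := lt_of_lt_of_le one_pos hr1
  have hv1 : c ≤ v (max 1 (t/c)) ^ (1/α) :=
    Real.rpow_le_rpow (hv_pos 1 one_pos).le (hv_mono 1 _ one_pos hr1) (by positivity)
  have ht : t ≤ max 1 (t/c) * c := by
    rw [← div_le_iff₀ hc]
    exact le_max_right _ _
  calc t ≤ max 1 (t/c) * c := ht
    _ ≤ max 1 (t/c) * v (max 1 (t/c)) ^ (1/α) := mul_le_mul_of_nonneg_left hv1 hrpos.le
    _ = hfun α v (max 1 (t/c)) := rfl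

lemma S_bdd' (t : ℝ) : BddBelow {r : ℝ | 0 < r ∧ t ≤ hfun α v r} :=
  ⟨0, fun _ hx => hx.1.le⟩

lemma hinv_nonneg' (t : ℝ) : 0 ≤ hinv α v t :=
  Real.sInf_nonneg (fun _ hx => hx.1.le)

lemma hinv_mono' (hα : 0 < α) (hv_pos : ∀ r : ℝ, 0 < r → 0 < v r)
    (hv_mono : ∀ r s : ℝ, 0 < r → r ≤ s → v r ≤ v s)
    {t₁ t₂ : ℝ} (h : t₁ ≤ t₂) : hinv α v t₁ ≤ hinv α v t₂ :=
  csInf_le_csInf (S_bdd' t₁) (S_nonempty' hα hv_pos hv_mono t₂)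
    (fun _ hx => ⟨hx.1, h.trans hx.2⟩)

lemma hfun_scale_ge' (hα : 0 < α) (hv_pos : ∀ r : ℝ, 0 < r → 0 < v r)
    (hv_mono : ∀ r s : ℝ, 0 < r → r ≤ s → v r ≤ v s)
    {lam x : ℝ} (hlam : 1 ≤ lam) (hx : 0 < x) :
    lam * hfun α v x ≤ hfun α v (lam * x) := by
  unfold hfun
  have hxle : x ≤ lam * x := le_mul_of_one_le_left hx.le hlam
  have h1 : v x ^ (1/α) ≤ v (lam * x) ^ (1/α) :=
    Real.rpow_le_rpow (hv_pos x hx).le (hv_mono x _ hx hxle) (by positivity)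
  calc lam * (x * v x ^ (1/α)) = (lam * x) * v x ^ (1/α) := by ring
    _ ≤ (lam * x) * v (lam * x) ^ (1/α) :=
        mul_le_mul_of_nonneg_left h1 (by positivity)

lemma hinv_scale_le' (hα : 0 < α) (hv_pos : ∀ r : ℝ, 0 < r → 0 < v r)
    (hv_mono : ∀ r s : ℝ, 0 < r → r ≤ s → v r ≤ v s)
    {lam t : ℝ} (hlam : 1 ≤ lam) :
    hinv α v (lam * t) ≤ lam * hinv α v t := by
  have hlam0 : 0 < lam := lt_of_lt_of_le one_pos hlam
  refine le_of_forall_pos_le_add (fun ε hε => ?_)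
  obtain ⟨s, hs, hslt⟩ := Real.lt_sInf_add_pos (S_nonempty' hα hv_pos hv_mono t)
    (show (0:ℝ) < ε/lam by positivity)
  set x := hinv α v t + ε/lam with hxdef
  have hxpos : 0 < x := lt_of_lt_of_le hs.1 (le_of_lt hslt)
  have hhx : t ≤ hfun α v x := hs.2.trans (hfun_mono' hα hv_pos hv_mono hs.1 hslt.le)
  have hmem : lam * x ∈ {r : ℝ | 0 < r ∧ lam * t ≤ hfun α v r} := by
    refine ⟨by positivity, ?_⟩
    calc lam * t ≤ lam * hfun α v x := mul_le_mul_of_nonneg_left hhx hlam0.le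
      _ ≤ hfun α v (lam * x) := hfun_scale_ge' hα hv_pos hv_mono hlam hxpos
  have hle := csInf_le (S_bdd' (lam * t)) hmem
  calc hinv α v (lam * t) ≤ lam * x := hle
    _ = lam * hinv α v t + ε := by rw [hxdef, mul_add, mul_div_cancel₀ _ hlam0.ne']

lemma v_doub_pow' (hcd : 1 ≤ cd) (hv_doub : ∀ r : ℝ, 0 < r → v (2 * r) ≤ cd * v r)
    (n : ℕ) {r : ℝ} (hr : 0 < r) : v (2^n * r) ≤ cd^n * v r := by
  induction n with
  | zero => simp
  | succ n ih =>
    have h2 : (0:ℝ) < 2^n * r := by positivity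
    calc v (2^(n+1) * r) = v (2 * (2^n * r)) := by ring_nf
      _ ≤ cd * v (2^n * r) := hv_doub _ h2
      _ ≤ cd * (cd^n * v r) := mul_le_mul_of_nonneg_left ih (le_trans zero_le_one hcd)
      _ = cd^(n+1) * v r := by ring

lemma v_scale' (hcd : 1 ≤ cd) (hv_pos : ∀ r : ℝ, 0 < r → 0 < v r)
    (hv_mono : ∀ r s : ℝ, 0 < r → r ≤ s → v r ≤ v s)
    (hv_doub : ∀ r : ℝ, 0 < r → v (2 * r) ≤ cd * v r)
    {κ r : ℝ} (hκ : 1 ≤ κ) (hr : 0 < r) :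
    v (κ * r) ≤ cd * κ ^ (Real.log cd / Real.log 2) * v r := by
  have hκ0 : 0 < κ := lt_of_lt_of_le one_pos hκ
  have hcd0 : 0 < cd := lt_of_lt_of_le one_pos hcd
  set n := ⌈Real.logb 2 κ⌉₊ with hn
  have hlogb0 : 0 ≤ Real.logb 2 κ := Real.logb_nonneg one_lt_two hκ
  have hκle : κ ≤ 2^n := by
    have h1 : κ = (2:ℝ) ^ (Real.logb 2 κ) := (Real.rpow_logb two_pos (by norm_num) hκ0).symm
    have h2 : (2:ℝ) ^ (Real.logb 2 κ) ≤ (2:ℝ) ^ ((n:ℝ)) :=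
      Real.rpow_le_rpow_of_exponent_le one_le_two (Nat.le_ceil _)
    rw [h1]
    calc (2:ℝ) ^ (Real.logb 2 κ) ≤ (2:ℝ) ^ ((n:ℝ)) := h2
      _ = 2^n := by rw [Real.rpow_natCast]
  have step1 : v (κ * r) ≤ cd^n * v r := by
    calc v (κ * r) ≤ v (2^n * r) := by
          refine hv_mono _ _ (by positivity) ?_
          exact mul_le_mul_of_nonneg_right hκle hr.le
      _ ≤ cd^n * v r := v_doub_pow' hcd hv_doub n hr
  have step2 : (cd:ℝ)^n ≤ cd * κ ^ (Real.log cd / Real.log 2) := by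
    have hn1 : (n:ℝ) ≤ Real.logb 2 κ + 1 := (Nat.ceil_lt_add_one hlogb0).le
    calc (cd:ℝ)^n = cd ^ ((n:ℝ)) := by rw [Real.rpow_natCast]
      _ ≤ cd ^ (Real.logb 2 κ + 1) := Real.rpow_le_rpow_of_exponent_le hcd hn1
      _ = cd ^ (Real.logb 2 κ) * cd := by rw [Real.rpow_add hcd0, Real.rpow_one]
      _ = cd * κ ^ (Real.log cd / Real.log 2) := by
          rw [Real.rpow_def_of_pos hcd0, Real.rpow_def_of_pos hκ0, Real.logb]
          rw [mul_comm]
          congr 1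
          field_simp
  calc v (κ * r) ≤ cd^n * v r := step1
    _ ≤ cd * κ ^ (Real.log cd / Real.log 2) * v r :=
        mul_le_mul_of_nonneg_right step2 (hv_pos r hr).le

lemma hfun_scale_le' (hα : 0 < α) (hcd : 1 ≤ cd)
    (hv_pos : ∀ r : ℝ, 0 < r → 0 < v r)
    (hv_mono : ∀ r s : ℝ, 0 < r → r ≤ s → v r ≤ v s)
    (hv_doub : ∀ r : ℝ, 0 < r → v (2 * r) ≤ cd * v r)
    {κ r : ℝ} (hκ : 1 ≤ κ) (hr : 0 < r) :
    hfun α v (κ * r) ≤ cd ^ (1/α) * κ ^ (1 + (Real.log cd / Real.log 2) / α) * hfun α v r := by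
  have hκ0 : 0 < κ := lt_of_lt_of_le one_pos hκ
  have hcd0 : 0 < cd := lt_of_lt_of_le one_pos hcd
  set γ := Real.log cd / Real.log 2 with hγ
  have hγ0 : 0 ≤ γ := div_nonneg (Real.log_nonneg hcd) (Real.log_nonneg one_le_two)
  have hv := v_scale' hcd hv_pos hv_mono hv_doub hκ hr
  have hvp : (0:ℝ) < v (κ * r) := hv_pos _ (by positivity)
  have h1 : v (κ * r) ^ (1/α) ≤ (cd * κ ^ γ * v r) ^ (1/α) :=
    Real.rpow_le_rpow hvp.le hv (by positivity)
  have h2 : (cd * κ ^ γ * v r) ^ (1/α)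
      = cd ^ (1/α) * κ ^ (γ/α) * v r ^ (1/α) := by
    rw [Real.mul_rpow (by positivity) (hv_pos r hr).le,
        Real.mul_rpow hcd0.le (by positivity),
        ← Real.rpow_mul hκ0.le, mul_one_div]
  have h3 : κ * κ ^ (γ/α) = κ ^ (1 + γ/α) := by
    rw [Real.rpow_add hκ0, Real.rpow_one]
  calc hfun α v (κ * r) = κ * r * v (κ * r) ^ (1/α) := rfl
    _ ≤ κ * r * (cd ^ (1/α) * κ ^ (γ/α) * v r ^ (1/α)) := by
        refine mul_le_mul_of_nonneg_left ?_ (by positivity)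
        rw [← h2]; exact h1
    _ = cd ^ (1/α) * (κ * κ ^ (γ/α)) * (r * v r ^ (1/α)) := by ring
    _ = cd ^ (1/α) * κ ^ (1 + γ/α) * hfun α v r := by rw [h3]; rfl

lemma hinv_scale_ge' (hα : 0 < α) (hcd : 1 ≤ cd)
    (hv_pos : ∀ r : ℝ, 0 < r → 0 < v r)
    (hv_mono : ∀ r s : ℝ, 0 < r → r ≤ s → v r ≤ v s)
    (hv_doub : ∀ r : ℝ, 0 < r → v (2 * r) ≤ cd * v r)
    {κ t : ℝ} (hκ : 1 ≤ κ) :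
    κ * hinv α v t
      ≤ hinv α v (cd ^ (1/α) * κ ^ (1 + (Real.log cd / Real.log 2) / α) * t) := by
  have hκ0 : 0 < κ := lt_of_lt_of_le one_pos hκ
  have hcd0 : 0 < cd := lt_of_lt_of_le one_pos hcd
  set q := 1 + (Real.log cd / Real.log 2) / α with hq
  have hCq0 : 0 < cd ^ (1/α) * κ ^ q := by positivity
  refine le_csInf (S_nonempty' hα hv_pos hv_mono _) (fun s hs => ?_)
  by_contra hlt
  push_neg at hlt
  have hs0 : 0 < s := hs.1
  have hsκ : 0 < s/κ := div_pos hs0 hκ0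
  have hdiv : s/κ < hinv α v t :=
    (div_lt_iff₀ hκ0).mpr (by linarith [hlt, mul_comm κ (hinv α v t)])
  have hnot : s/κ ∉ {r : ℝ | 0 < r ∧ t ≤ hfun α v r} :=
    fun hmem => absurd (csInf_le (S_bdd' t) hmem) (not_le.mpr hdiv)
  have hlt2 : hfun α v (s/κ) < t := by
    by_contra h
    exact hnot ⟨hsκ, le_of_not_gt h⟩
  have hmain : hfun α v s < cd ^ (1/α) * κ ^ q * t := by
    have heq : κ * (s/κ) = s := mul_div_cancel₀ s hκ0.ne' ▸ by field_simp
    calc hfun α v s = hfun α v (κ * (s/κ)) := by rw [heq]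
      _ ≤ cd ^ (1/α) * κ ^ q * hfun α v (s/κ) :=
          hfun_scale_le' hα hcd hv_pos hv_mono hv_doub hκ hsκ
      _ < cd ^ (1/α) * κ ^ q * t := mul_lt_mul_of_pos_left hlt2 hCq0
  exact absurd hs.2 (not_le.mpr hmain)

end auxLemmas

/-- Lemma 4.4(4), second displayed inequality: with `q = 1 + γ/α`,
`c₃ h⁻¹(r) (log|log r|)^(1/q) ≤ h⁻¹(r log|log r|) ≤ c₄ h⁻¹(r) log|log r|`
for all `r ∈ (0, e^{-e})`. -/
theorem stmt_7 (α cd : ℝ) (hα : α ∈ Set.Ioo (0:ℝ) 1) (hcd : 1 ≤ cd)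
    (v : ℝ → ℝ) (hv_pos : ∀ r : ℝ, 0 < r → 0 < v r)
    (hv_mono : ∀ r s : ℝ, 0 < r → r ≤ s → v r ≤ v s)
    (hv_doub : ∀ r : ℝ, 0 < r → v (2 * r) ≤ cd * v r) :
    ∃ c₃ : ℝ, 0 < c₃ ∧ ∃ c₄ : ℝ, 0 < c₄ ∧
      ∀ r ∈ Set.Ioo (0:ℝ) (Real.exp (-(Real.exp 1))),
        c₃ * hinv α v r *
            (Real.log |Real.log r|) ^ (1 / (1 + (Real.log cd / Real.log 2) / α))
          ≤ hinv α v (r * Real.log |Real.log r|) ∧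
        hinv α v (r * Real.log |Real.log r|)
          ≤ c₄ * hinv α v r * Real.log |Real.log r| := by
  obtain ⟨hα0, hα1⟩ := hα
  have hcd0 : 0 < cd := lt_of_lt_of_le one_pos hcd
  set γ := Real.log cd / Real.log 2 with hγ
  set q := 1 + γ / α with hq
  have hγ0 : 0 ≤ γ := div_nonneg (Real.log_nonneg hcd) (Real.log_nonneg one_le_two)
  have hq1 : (1:ℝ) ≤ q := le_add_of_nonneg_right (div_nonneg hγ0 hα0.le)
  have hq0 : 0 < q := lt_of_lt_of_le one_pos hq1
  set C := cd ^ (1/α) with hC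
  have hC1 : 1 ≤ C := Real.one_le_rpow hcd (by positivity)
  have hC0 : 0 < C := lt_of_lt_of_le one_pos hC1
  refine ⟨(1/C) ^ (1/q), by positivity, 1, one_pos, fun r hr => ?_⟩
  obtain ⟨hr0, hre⟩ := hr
  set lam := Real.log |Real.log r| with hlam
  have hlog : Real.log r < -(Real.exp 1) := by
    have := Real.log_lt_log hr0 hre
    rwa [Real.log_exp] at this
  have hlogneg : Real.log r < 0 := lt_trans hlog (neg_lt_zero.mpr (Real.exp_pos 1))
  have habs : Real.exp 1 < |Real.log r| := by
    rw [abs_of_neg hlogneg]; linarith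
  have hlam1 : 1 < lam := by
    have := Real.log_lt_log (Real.exp_pos 1) habs
    rwa [Real.log_exp] at this
  have hlam0 : 0 < lam := lt_trans one_pos hlam1
  constructor
  · -- lower bound
    rcases le_or_gt C lam with hcase | hcase
    · set κ := (lam/C) ^ (1/q) with hκ
      have hlamC1 : 1 ≤ lam / C := (one_le_div hC0).mpr hcase
      have hκ1 : 1 ≤ κ := Real.one_le_rpow hlamC1 (by positivity)
      have key := hinv_scale_ge' hα0 hcd hv_pos hv_mono hv_doub (t := r) hκ1
      have hκq : κ ^ q = lam / C := by
        rw [hκ, ← Real.rpow_mul (by positivity), one_div_mul_cancel hq0.ne', Real.rpow_one]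
      have hCκ : C * κ ^ q * r = r * lam := by
        rw [hκq, mul_div_cancel₀ _ hC0.ne', mul_comm]
      have hc3 : (1/C) ^ (1/q) * lam ^ (1/q) = κ := by
        rw [hκ, ← Real.mul_rpow (by positivity) hlam0.le]
        congr 1
        field_simp
      calc (1/C) ^ (1/q) * hinv α v r * lam ^ (1/q)
          = κ * hinv α v r := by rw [← hc3]; ring
        _ ≤ hinv α v (C * κ ^ q * r) := key
        _ = hinv α v (r * lam) := by rw [hCκ]
    · have h1 : (1/C) ^ (1/q) * lam ^ (1/q) ≤ 1 := by
        rw [← Real.mul_rpow (by positivity) hlam0.le]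
        refine Real.rpow_le_one (by positivity) ?_ (by positivity)
        rw [one_div_mul_eq_div, div_le_one hC0]
        exact hcase.le
      calc (1/C) ^ (1/q) * hinv α v r * lam ^ (1/q)
          = ((1/C) ^ (1/q) * lam ^ (1/q)) * hinv α v r := by ring
        _ ≤ 1 * hinv α v r := mul_le_mul_of_nonneg_right h1 (hinv_nonneg' r)
        _ = hinv α v r := one_mul _
        _ ≤ hinv α v (r * lam) := hinv_mono' hα0 hv_pos hv_mono
            (le_mul_of_one_le_right hr0.le hlam1.le)
  · -- upper bound
    have h := hinv_scale_le' hα0 hv_pos hv_mono (t := r) hlam1.le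
    calc hinv α v (r * lam) = hinv α v (lam * r) := by rw [mul_comm]
      _ ≤ lam * hinv α v r := h
      _ = 1 * hinv α v r * lam := by ring
end

section
/- Let (F, d) be a geodesic metric space (every pair of points is joined by an isometric image of a real interval) with diameter D_F := sup_{x,y∈F} d(x,y) > 0, let μ be a Borel measure on F, and suppose there exist constants 0 < c_l ≤ c_u, R₀ > 0, c_d ≥ 1 and a non-decreasing function v : (0,∞) → (0,∞) with v(2r) ≤ c_d·v(r) for all r > 0, such that c_l·v(r) ≤ μ(B(x,r)) ≤ c_u·v(r) for every x ∈ F and r ∈ (0, R₀). Then there exists a constant c > 0, depending only on c_l, c_u and c_d, such that for every integer k ≥ 1 and every D with 0 < D < D_F and 2D < R₀, one has v(D) ≥ c·k·v(D/k). -/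
open MeasureTheory Metric Function

/-! Since `D < D_F`, some geodesic `g` from a point `x` has length at least `D`. With
`r = D / (2k)`, the `k` balls of radius `r` centred at `g((2i + 1) r)` are disjoint and lie in
`B(x, D)`, so `k · c_l · v(r) ≤ c_u · v(D)`; one doubling step `v(D / k) = v(2r) ≤ c_d · v(r)`
then gives the claim with `c = c_l / (c_u c_d)`. -/

theorem exists_lt_dist_of_ofReal_lt_diam {X : Type*} [PseudoMetricSpace X] {D : ℝ}
    (hD : ENNReal.ofReal D < ediam (Set.univ : Set X)) : ∃ x y : X, D < dist x y := by
  by_contra! h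
  refine hD.not_ge (ediam_le fun a _ b _ => ?_)
  rw [edist_dist]
  exact ENNReal.ofReal_le_ofReal (h a b)

theorem natCast_mul_le_measure_of_pairwise_disjoint {X ι : Type*} [MeasurableSpace X]
    [Fintype ι] (μ : Measure X) {s : ι → Set X} {t : Set X} {m : ENNReal}
    (hs : ∀ i, MeasurableSet (s i)) (hdisj : Pairwise (Disjoint on s))
    (hm : ∀ i, m ≤ μ (s i)) (hst : ∀ i, s i ⊆ t) :
    Fintype.card ι * m ≤ μ t :=
  calc (Fintype.card ι : ENNReal) * m = ∑ _i : ι, m := by simp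
    _ ≤ ∑ i, μ (s i) := Finset.sum_le_sum fun i _ => hm i
    _ = μ (⋃ i, s i) := by rw [measure_iUnion hdisj hs, tsum_fintype]
    _ ≤ μ t := measure_mono (Set.iUnion_subset hst)

section Geodesic

variable {X : Type*} [MetricSpace X] {x : X} {g : ℝ → X} {L r : ℝ} {k : ℕ}

theorem two_mul_add_one_mul_mem_Icc (hr : 0 ≤ r) (hkL : 2 * k * r ≤ L) (i : Fin k) :
    (2 * i + 1) * r ∈ Set.Icc 0 L := by
  have hi : (i : ℝ) + 1 ≤ k := by exact_mod_cast i.2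
  exact ⟨by positivity, by nlinarith⟩

theorem dist_geodesic_odd_mul {i j : Fin k} (hg : ∀ s ∈ Set.Icc 0 L, ∀ t ∈ Set.Icc 0 L,
      dist (g s) (g t) = |s - t|) (hr : 0 ≤ r) (hkL : 2 * k * r ≤ L) :
    dist (g ((2 * i + 1) * r)) (g ((2 * j + 1) * r)) = 2 * |(i : ℝ) - j| * r := by
  rw [hg _ (two_mul_add_one_mul_mem_Icc hr hkL i) _ (two_mul_add_one_mul_mem_Icc hr hkL j),
    show (2 * (i : ℝ) + 1) * r - (2 * j + 1) * r = 2 * r * (i - j) by ring,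
    abs_mul, abs_of_nonneg (by positivity : 0 ≤ 2 * r)]
  ring

theorem ball_geodesic_odd_mul_subset (hg0 : g 0 = x) (hg : ∀ s ∈ Set.Icc 0 L, ∀ t ∈ Set.Icc 0 L,
      dist (g s) (g t) = |s - t|) (hr : 0 ≤ r) (hkL : 2 * k * r ≤ L) (i : Fin k) :
    ball (g ((2 * i + 1) * r)) r ⊆ ball x (2 * k * r) := by
  have hi : (i : ℝ) + 1 ≤ k := by exact_mod_cast i.2
  have hs := two_mul_add_one_mul_mem_Icc hr hkL i
  have hx : dist (g ((2 * i + 1) * r)) x = (2 * i + 1) * r := by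
    rw [← hg0, hg _ hs 0 ⟨le_rfl, hs.1.trans hs.2⟩, sub_zero, abs_of_nonneg hs.1]
  exact ball_subset_ball' (by rw [hx]; nlinarith)

theorem natCast_mul_le_measure_ball_of_geodesic [MeasurableSpace X] [OpensMeasurableSpace X]
    (μ : Measure X) (hg0 : g 0 = x) (hg : ∀ s ∈ Set.Icc 0 L, ∀ t ∈ Set.Icc 0 L,
      dist (g s) (g t) = |s - t|) (hr : 0 < r) (hkL : 2 * k * r ≤ L) {m : ENNReal}
    (hm : ∀ z, m ≤ μ (ball z r)) :
    k * m ≤ μ (ball x (2 * k * r)) := by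
  have hdisj : Pairwise (Disjoint on fun i : Fin k => ball (g ((2 * i + 1) * r)) r) := by
    intro i j hij
    have hij' : (1 : ℝ) ≤ |(i : ℝ) - j| := by
      exact_mod_cast Int.one_le_abs (sub_ne_zero.mpr (by exact_mod_cast Fin.val_ne_of_ne hij :
        ((i : ℕ) : ℤ) ≠ j))
    exact ball_disjoint_ball (by rw [dist_geodesic_odd_mul hg hr.le hkL]; nlinarith)
  simpa using natCast_mul_le_measure_of_pairwise_disjoint μ (fun _ => measurableSet_ball) hdisj
    (fun _ => hm _) (ball_geodesic_odd_mul_subset hg0 hg hr.le hkL)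

end Geodesic

theorem stmt_11_general {F : Type*} [MetricSpace F] [MeasurableSpace F] [BorelSpace F]
    (hgeo : ∀ x y : F, ∃ g : ℝ → F, g 0 = x ∧ g (dist x y) = y ∧
      ∀ s ∈ Set.Icc (0:ℝ) (dist x y), ∀ t ∈ Set.Icc (0:ℝ) (dist x y),
        dist (g s) (g t) = |s - t|)
    (μ : Measure F) (cl cu R₀ cd : ℝ)
    (hcl : 0 < cl) (hclu : cl ≤ cu) (hcd : 1 ≤ cd)
    (v : ℝ → ℝ) (hv_pos : ∀ r : ℝ, 0 < r → 0 < v r)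
    (hv_doub : ∀ r : ℝ, 0 < r → v (2 * r) ≤ cd * v r)
    (hvol : ∀ x : F, ∀ r ∈ Set.Ioo (0:ℝ) R₀,
      ENNReal.ofReal (cl * v r) ≤ μ (Metric.ball x r) ∧
      μ (Metric.ball x r) ≤ ENNReal.ofReal (cu * v r)) :
    ∃ c : ℝ, 0 < c ∧ ∀ k : ℕ, 1 ≤ k → ∀ D : ℝ, 0 < D →
      ENNReal.ofReal D < EMetric.diam (Set.univ : Set F) → 2 * D < R₀ →
      c * k * v (D / k) ≤ v D := by
  have hcu : 0 < cu := hcl.trans_le hclu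
  refine ⟨cl / (cu * cd), by positivity, fun k hk D hD hDdiam hDR => ?_⟩
  obtain ⟨x, y, hxy⟩ := exists_lt_dist_of_ofReal_lt_diam hDdiam
  obtain ⟨g, hg0, -, hg⟩ := hgeo x y
  have hk1 : (1 : ℝ) ≤ k := by exact_mod_cast hk
  set r := D / (2 * k)
  have hr : 0 < r := by positivity
  have hkr : 2 * k * r = D := by simp only [r]; field_simp
  have hrR : r < R₀ := (div_le_self hD.le (by linarith)).trans_lt (by linarith)
  have hpack : k * (cl * v r) ≤ cu * v D := by
    have h : (k : ENNReal) * ENNReal.ofReal (cl * v r) ≤ ENNReal.ofReal (cu * v D) :=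
      calc _ ≤ μ (ball x D) := by
            simpa only [hkr] using natCast_mul_le_measure_ball_of_geodesic μ hg0 hg hr
              (hkr.trans_le hxy.le) fun z => (hvol z r ⟨hr, hrR⟩).1
        _ ≤ _ := (hvol x D ⟨hD, by linarith⟩).2
    rwa [← ENNReal.ofReal_natCast, ← ENNReal.ofReal_mul (by positivity),
      ENNReal.ofReal_le_ofReal_iff (by have := hv_pos D hD; positivity)] at h
  have hdoub : v (D / k) ≤ cd * v r := by
    rw [show D / k = 2 * r by simp only [r]; field_simp]
    exact hv_doub r hr
  calc cl / (cu * cd) * k * v (D / k) ≤ cl / (cu * cd) * k * (cd * v r) := by gcongr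
    _ = k * (cl * v r) / cu := by field_simp
    _ ≤ cu * v D / cu := by gcongr
    _ = v D := by field_simp

/-- Volume comparison along geodesics (used in Theorems 5.1(b) and 1.1(b)):
in a geodesic space carrying a measure with uniform doubling volume growth,
`v(D) ≥ c · k · v(D/k)` for all integers `k ≥ 1` and all `D` with
`0 < D < D_F` and `2D < R₀`. -/
theorem stmt_11 {F : Type*} [MetricSpace F] [MeasurableSpace F] [BorelSpace F]
    (hgeo : ∀ x y : F, ∃ g : ℝ → F, g 0 = x ∧ g (dist x y) = y ∧
      ∀ s ∈ Set.Icc (0:ℝ) (dist x y), ∀ t ∈ Set.Icc (0:ℝ) (dist x y),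
        dist (g s) (g t) = |s - t|)
    (hdiam : 0 < EMetric.diam (Set.univ : Set F))
    (μ : Measure F) (cl cu R₀ cd : ℝ)
    (hcl : 0 < cl) (hclu : cl ≤ cu) (hR₀ : 0 < R₀) (hcd : 1 ≤ cd)
    (v : ℝ → ℝ) (hv_pos : ∀ r : ℝ, 0 < r → 0 < v r)
    (hv_mono : ∀ r s : ℝ, 0 < r → r ≤ s → v r ≤ v s)
    (hv_doub : ∀ r : ℝ, 0 < r → v (2 * r) ≤ cd * v r)
    (hvol : ∀ x : F, ∀ r ∈ Set.Ioo (0:ℝ) R₀,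
      ENNReal.ofReal (cl * v r) ≤ μ (Metric.ball x r) ∧
      μ (Metric.ball x r) ≤ ENNReal.ofReal (cu * v r)) :
    ∃ c : ℝ, 0 < c ∧ ∀ k : ℕ, 1 ≤ k → ∀ D : ℝ, 0 < D →
      ENNReal.ofReal D < EMetric.diam (Set.univ : Set F) → 2 * D < R₀ →
      c * k * v (D / k) ≤ v D :=
  stmt_11_general hgeo μ cl cu R₀ cd hcl hclu hcd v hv_pos hv_doub hvol
end
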